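/- Let G be a hyperbolic group with finite symmetric generating set S, with Cay(G,S) δ-hyperbolic, and let ≤_lex-minimal types σ_ζ ∈ S^ℕ be assigned to each boundary point ζ as in the definition of Φ. Fix η ∈ ∂G and r > 0, let ρ be the Schreier graph metric on ∂G for the boundary action, ρ_s the shift-graph metric on S^ℕ, and M_{5δ} a bound on the size of balls of radius 5δ in Cay(G,S). Then the set {σ_ζ : ζ ∈ B_ρ(η,r)} can be partitioned into at most (M_{5δ})² sets each of ρ_s-diameter at most 8(r + 3δ + 2); in particular it meets at most (M_{5δ})² tail equivalence classes of S^ℕ. -/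

import Mathlib

/-
For `g` of word length at most `r` let `R g` be the lexicographically least geodesic ray from
`g` towards `η`; every `σ_ζ` with `ζ ∈ B_ρ(η, r)` is the type of some `R g`. Splicing a piece
of one least ray into another shows that two least rays meeting at two points with equal gaps
agree in between. Hence, among the finitely many `R g`, two rays either meet only below some
bound `B`, or coincide from every common point on. Label `R g` by its points near `γ t₁` and
near `γ t₀` on a fixed ray `γ` from `1`, with `t₁` beyond `B` and `t₀ ≈ r + δ`. By thinness of
triangles these points lie in `2δ`-balls, so there are at most `M²` labels, and two rays with
the same label coincide after indices `O(r + δ)`, so that their types are close in `ρ_s`.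
-/

namespace BA

open SimpleGraph

variable {V : Type*}

/-- A geodesic ray in a graph: consecutive vertices are adjacent and the graph
distance between the `m`-th and `n`-th vertices is `|m - n|`. -/
def GeoRay (G : SimpleGraph V) (x : ℕ → V) : Prop :=
  (∀ n, G.Adj (x n) (x (n + 1))) ∧ ∀ m n, G.dist (x m) (x n) = Nat.dist m n

/-- A finite geodesic path of length `k`, recorded as a function `ℕ → V`
(only the values at indices `≤ k` are relevant). -/
def GeoSeg (G : SimpleGraph V) (p : ℕ → V) (k : ℕ) : Prop :=
  (∀ i < k, G.Adj (p i) (p (i + 1))) ∧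
    ∀ i ≤ k, ∀ j ≤ k, G.dist (p i) (p j) = Nat.dist i j

/-- Two sequences of vertices are asymptotic iff their Hausdorff distance is
finite (expressed via walks, so it is meaningful in disconnected graphs). -/
def Asymp (G : SimpleGraph V) (x y : ℕ → V) : Prop :=
  ∃ K : ℕ, (∀ n, ∃ m, ∃ w : G.Walk (x n) (y m), w.length ≤ K) ∧
    ∀ m, ∃ n, ∃ w : G.Walk (x n) (y m), w.length ≤ K

theorem asymp_refl (G : SimpleGraph V) (x : ℕ → V) : Asymp G x x :=
  ⟨0, fun n => ⟨n, Walk.nil, by simp⟩, fun n => ⟨n, Walk.nil, by simp⟩⟩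

theorem asymp_symm {G : SimpleGraph V} {x y : ℕ → V} (h : Asymp G x y) : Asymp G y x := by
  obtain ⟨K, h1, h2⟩ := h
  refine ⟨K, fun n => ?_, fun m => ?_⟩
  · obtain ⟨m, w, hw⟩ := h2 n
    exact ⟨m, w.reverse, by simpa using hw⟩
  · obtain ⟨n, w, hw⟩ := h1 m
    exact ⟨n, w.reverse, by simpa using hw⟩

theorem asymp_trans {G : SimpleGraph V} {x y z : ℕ → V} (h : Asymp G x y)
    (h' : Asymp G y z) : Asymp G x z := by
  obtain ⟨K1, h1, h2⟩ := h
  obtain ⟨K2, h3, h4⟩ := h'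
  refine ⟨K1 + K2, fun n => ?_, fun p => ?_⟩
  · obtain ⟨m, w1, hw1⟩ := h1 n
    obtain ⟨p, w2, hw2⟩ := h3 m
    exact ⟨p, w1.append w2, by rw [Walk.length_append]; omega⟩
  · obtain ⟨m, w2, hw2⟩ := h4 p
    obtain ⟨n, w1, hw1⟩ := h2 m
    exact ⟨n, w1.append w2, by rw [Walk.length_append]; omega⟩

/-- The setoid of geodesic rays up to asymptoticity; its quotient is the
(Gromov) boundary of the graph. -/
def asympSetoid (G : SimpleGraph V) : Setoid {x : ℕ → V // GeoRay G x} where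
  r a b := Asymp G a.1 b.1
  iseqv := ⟨fun a => asymp_refl G a.1, fun h => asymp_symm h, fun h h' => asymp_trans h h'⟩

/-- `δ`-hyperbolicity: every geodesic triangle is `δ`-thin, i.e. each side is
contained in the `δ`-neighbourhood of the union of the other two sides. -/
def DeltaThin (G : SimpleGraph V) (δ : ℝ) : Prop :=
  ∀ (a b c : ℕ) (p q r : ℕ → V), GeoSeg G p a → GeoSeg G q b → GeoSeg G r c →
    p a = q 0 → p 0 = r 0 → q b = r c → ∀ i ≤ c,
      ∃ j, (j ≤ a ∧ (G.dist (r i) (p j) : ℝ) ≤ δ) ∨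
           (j ≤ b ∧ (G.dist (r i) (q j) : ℝ) ≤ δ)

/-- The Cayley graph of a group w.r.t. a (symmetric) set `S`. -/
def cayley {G : Type*} [Group G] (S : Set G) : SimpleGraph G :=
  SimpleGraph.fromRel fun g h => g⁻¹ * h ∈ S

/-- The type of a path `(x_n)` in a Cayley graph: the sequence `x_n⁻¹ x_{n+1}`. -/
def typ {G : Type*} [Group G] (x : ℕ → G) : ℕ → G := fun n => (x n)⁻¹ * x (n + 1)

/-- Lexicographic order on sequences. -/
def lexLe {α : Type*} [LinearOrder α] (x y : ℕ → α) : Prop :=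
  x = y ∨ ∃ n, (∀ m < n, x m = y m) ∧ x n < y n

/-- Lexicographic order on the first `k` entries of sequences. -/
def lexLeUpTo {α : Type*} [LinearOrder α] (k : ℕ) (x y : ℕ → α) : Prop :=
  (∀ i < k, x i = y i) ∨ ∃ n < k, (∀ m < n, x m = y m) ∧ x n < y n

/-- `g` can be written as a product of at most `r` elements of `S`. -/
def wordLenLe {G : Type*} [Group G] (S : Set G) (g : G) (r : ℝ) : Prop :=
  ∃ l : List G, (∀ s ∈ l, s ∈ S) ∧ l.prod = g ∧ (l.length : ℝ) ≤ r

/-- The left shift on sequences. -/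
def shift {α : Type*} (x : ℕ → α) : ℕ → α := fun n => x (n + 1)

/-- The graph on `ℕ → α` induced by the left shift: `x` adjacent to `y` iff
`s x = y` or `s y = x` (and `x ≠ y`). -/
def shiftGraph (α : Type*) : SimpleGraph (ℕ → α) :=
  SimpleGraph.fromRel fun x y => shift x = y

/-- `ρ_s(x, y) ≤ r` for the graph metric `ρ_s` of the shift graph. -/
def shiftDistLe {α : Type*} (x y : ℕ → α) (r : ℝ) : Prop :=
  ∃ w : (shiftGraph α).Walk x y, (w.length : ℝ) ≤ r

/-- Tail equivalence of sequences. -/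
def tailEquiv {α : Type*} (x y : ℕ → α) : Prop :=
  ∃ T0 T1 : ℕ, ∀ n, x (T0 + n) = y (T1 + n)

/-- A finite Borel equivalence relation. -/
def IsFiniteBorelEquiv {X : Type*} [MeasurableSpace X] (F : X → X → Prop) : Prop :=
  Equivalence F ∧ MeasurableSet {p : X × X | F p.1 p.2} ∧ ∀ x, {y | F x y}.Finite

/-- A relation is hyperfinite if it is the union of an increasing sequence of
finite Borel equivalence relations. -/
def Hyperfinite {X : Type*} [MeasurableSpace X] (E : X → X → Prop) : Prop :=
  ∃ F : ℕ → X → X → Prop, (∀ n, IsFiniteBorelEquiv (F n)) ∧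
    (∀ n x y, F n x y → F (n + 1) x y) ∧ ∀ x y, E x y ↔ ∃ n, F n x y

end BA

namespace BA

open SimpleGraph Filter

section Geodesics

variable {V : Type*} {Γ : SimpleGraph V}

lemma dist_le_sub_of_adj (hconn : Γ.Connected) {x : ℕ → V} {L : ℕ}
    (hadj : ∀ i < L, Γ.Adj (x i) (x (i + 1))) {i j : ℕ} (hij : i ≤ j) (hj : j ≤ L) :
    Γ.dist (x i) (x j) ≤ j - i := by
  induction j, hij using Nat.le_induction with
  | base => simp
  | succ j hij ih =>
    have hstep := dist_eq_one_iff_adj.mpr (hadj j (by omega))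
    have := hconn.dist_triangle (u := x i) (v := x j) (w := x (j + 1))
    have := ih (by omega)
    omega

lemma geoSeg_of_adj (hconn : Γ.Connected) {x : ℕ → V} {L : ℕ}
    (hadj : ∀ i < L, Γ.Adj (x i) (x (i + 1))) (hL : L ≤ Γ.dist (x 0) (x L)) :
    GeoSeg Γ x L := by
  have hle : ∀ i j, i ≤ j → j ≤ L → Γ.dist (x i) (x j) = j - i := by
    intro i j hij hj
    have h0i := dist_le_sub_of_adj hconn hadj (Nat.zero_le i) (hij.trans hj)
    have hjL := dist_le_sub_of_adj hconn hadj hj le_rfl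
    have h1 := hconn.dist_triangle (u := x 0) (v := x i) (w := x L)
    have h2 := hconn.dist_triangle (u := x i) (v := x j) (w := x L)
    have := dist_le_sub_of_adj hconn hadj hij hj
    omega
  refine ⟨hadj, fun i hi j hj => ?_⟩
  rcases le_total i j with hij | hji
  · rw [hle i j hij hj, Nat.dist_eq_sub_of_le hij]
  · rw [dist_comm, hle j i hji hi, Nat.dist_eq_sub_of_le_right hji]

lemma geoRay_of_adj (hconn : Γ.Connected) {x : ℕ → V} (hadj : ∀ n, Γ.Adj (x n) (x (n + 1)))
    (hfar : ∀ N, ∃ L, N ≤ L ∧ L ≤ Γ.dist (x 0) (x L)) : GeoRay Γ x := by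
  refine ⟨hadj, fun m n => ?_⟩
  obtain ⟨L, hL, hLd⟩ := hfar (m + n)
  exact (geoSeg_of_adj hconn (fun i _ => hadj i) hLd).2 m (by omega) n (by omega)

lemma exists_geoSeg (hconn : Γ.Connected) (u v : V) :
    ∃ p : ℕ → V, GeoSeg Γ p (Γ.dist u v) ∧ p 0 = u ∧ p (Γ.dist u v) = v := by
  obtain ⟨w, hw⟩ := hconn.exists_walk_length_eq_dist u v
  have hend : w.getVert (Γ.dist u v) = v := by rw [← hw, Walk.getVert_length]
  refine ⟨w.getVert, geoSeg_of_adj hconn (fun i hi => w.adj_getVert_succ (by omega)) ?_,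
    w.getVert_zero, hend⟩
  rw [w.getVert_zero, hend]

variable {x y : ℕ → V}

lemma GeoRay.dist_eq_sub (hx : GeoRay Γ x) {m n : ℕ} (h : m ≤ n) :
    Γ.dist (x m) (x n) = n - m := by
  rw [hx.2, Nat.dist_eq_sub_of_le h]

lemma GeoRay.dist_zero (hx : GeoRay Γ x) (n : ℕ) : Γ.dist (x 0) (x n) = n := by
  simpa using hx.dist_eq_sub (Nat.zero_le n)

lemma GeoRay.toGeoSeg (hx : GeoRay Γ x) (l : ℕ) : GeoSeg Γ x l :=
  ⟨fun _ _ => hx.1 _, fun i _ j _ => hx.2 i j⟩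

lemma GeoRay.geoSeg (hx : GeoRay Γ x) (m l : ℕ) : GeoSeg Γ (fun i => x (m + i)) l :=
  ⟨fun _ _ => hx.1 _, fun i _ j _ => by rw [hx.2, Nat.dist_add_add_left]⟩

lemma GeoRay.le_add_dist (hconn : Γ.Connected) (hx : GeoRay Γ x) (hy : GeoRay Γ y)
    (m n : ℕ) : m ≤ n + Γ.dist (x m) (y n) + Γ.dist (x 0) (y 0) := by
  have h1 := hconn.dist_triangle (u := x 0) (v := y 0) (w := x m)
  have h2 := hconn.dist_triangle (u := y 0) (v := y n) (w := x m)
  rw [hx.dist_zero] at h1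
  rw [hy.dist_zero, dist_comm (u := y n)] at h2
  omega

end Geodesics

section Hyperbolic

variable {V : Type*} {Γ : SimpleGraph V}

lemma DeltaThin.floor {δ : ℝ} (h : DeltaThin Γ δ) : DeltaThin Γ ⌊δ⌋₊ := by
  intro a b c p q r hp hq hr hpq hpr hqr i hi
  obtain ⟨j, hj⟩ := h a b c p q r hp hq hr hpq hpr hqr i hi
  refine ⟨j, hj.imp (And.imp_right fun hd => ?_) (And.imp_right fun hd => ?_)⟩ <;>
    exact_mod_cast Nat.le_floor hd

lemma DeltaThin.exists_dist_le {k : ℕ} (hthin : DeltaThin Γ k) {a b c : ℕ} {p q r : ℕ → V}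
    (hp : GeoSeg Γ p a) (hq : GeoSeg Γ q b) (hr : GeoSeg Γ r c)
    (hpq : p a = q 0) (hpr : p 0 = r 0) (hqr : q b = r c) {i : ℕ} (hi : i ≤ c) :
    ∃ j, (j ≤ a ∧ Γ.dist (r i) (p j) ≤ k) ∨ (j ≤ b ∧ Γ.dist (r i) (q j) ≤ k) := by
  obtain ⟨j, hj⟩ := hthin a b c p q r hp hq hr hpq hpr hqr i hi
  exact ⟨j, by exact_mod_cast hj⟩

/-- The triangle `γ 0, R 0, γ T` puts `γ t` near a point of the side `[R 0, γ T]`, and the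
triangle `R 0, R N, γ T` puts that point near `R`. -/
lemma DeltaThin.exists_dist_le_of_asymp (hconn : Γ.Connected) {k : ℕ} (hthin : DeltaThin Γ k)
    {γ R : ℕ → V} (hγ : GeoRay Γ γ) (hR : GeoRay Γ R) (hRγ : Asymp Γ R γ) {t : ℕ}
    (ht : Γ.dist (γ 0) (R 0) + k < t) : ∃ m, Γ.dist (R m) (γ t) ≤ 2 * k := by
  set D := Γ.dist (γ 0) (R 0)
  obtain ⟨K, hK, -⟩ := hRγ
  set N := D + t + 2 * k + K + 1
  obtain ⟨T, w, hw⟩ := hK N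
  have hNT : Γ.dist (R N) (γ T) ≤ K := (dist_le w).trans hw
  have hT := hR.le_add_dist hconn hγ N T
  rw [dist_comm (u := R 0)] at hT
  obtain ⟨p₁, hp₁, hp₁0, hp₁e⟩ := exists_geoSeg hconn (γ 0) (R 0)
  obtain ⟨q₁, hq₁, hq₁0, hq₁e⟩ := exists_geoSeg hconn (R 0) (γ T)
  obtain ⟨q₂, hq₂, hq₂0, hq₂e⟩ := exists_geoSeg hconn (R N) (γ T)
  obtain ⟨j, ⟨hj, hdj⟩ | ⟨hj, hdj⟩⟩ := hthin.exists_dist_le hp₁ hq₁ (hγ.toGeoSeg T)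
    (hp₁e.trans hq₁0.symm) hp₁0 hq₁e (i := t) (by omega)
  · -- `γ t` is too far from `γ 0` to be close to the side `[γ 0, R 0]`
    have h0j := hp₁.2 0 (Nat.zero_le _) j hj
    have := hconn.dist_triangle (u := γ 0) (v := p₁ j) (w := γ t)
    rw [hγ.dist_zero, ← hp₁0, h0j, SimpleGraph.dist_comm (u := p₁ j)] at this
    rw [Nat.dist_zero_left] at this
    omega
  obtain ⟨j₂, ⟨hj₂, hdj₂⟩ | ⟨hj₂, hdj₂⟩⟩ := hthin.exists_dist_le (hR.toGeoSeg N) hq₂ hq₁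
    hq₂0.symm hq₁0.symm (hq₂e.trans hq₁e.symm) hj
  · refine ⟨j₂, ?_⟩
    have := hconn.dist_triangle (u := R j₂) (v := q₁ j) (w := γ t)
    rw [SimpleGraph.dist_comm (u := q₁ j), SimpleGraph.dist_comm (u := γ t)] at *
    omega
  · -- `q₁ j` is too far from `R N` to be close to the side `[R N, γ T]`
    have h0j₂ := hq₂.2 0 (Nat.zero_le _) j₂ hj₂
    rw [hq₂0, Nat.dist_zero_left] at h0j₂
    have h1 := hconn.dist_triangle (u := R 0) (v := γ 0) (w := R N)
    have h2 := hconn.dist_triangle (u := γ 0) (v := γ t) (w := R N)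
    have h3 := hconn.dist_triangle (u := γ t) (v := q₁ j) (w := R N)
    have h4 := hconn.dist_triangle (u := q₁ j) (v := q₂ j₂) (w := R N)
    rw [hR.dist_zero, SimpleGraph.dist_comm (u := R 0)] at h1
    rw [hγ.dist_zero] at h2
    rw [SimpleGraph.dist_comm (u := q₂ j₂)] at h4
    omega

lemma DeltaThin.exists_near_of_asymp (hconn : Γ.Connected) {k : ℕ} (hthin : DeltaThin Γ k)
    {γ R : ℕ → V} (hγ : GeoRay Γ γ) (hR : GeoRay Γ R) (hRγ : Asymp Γ R γ) {ρ : ℕ}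
    (hρ : Γ.dist (γ 0) (R 0) ≤ ρ) {t : ℕ} (ht : ρ + k < t) :
    ∃ n, Γ.dist (R n) (γ t) ≤ 2 * k ∧ t ≤ n + 2 * k + ρ ∧ n ≤ t + 2 * k + ρ := by
  obtain ⟨n, hn⟩ := hthin.exists_dist_le_of_asymp hconn hγ hR hRγ (t := t) (by omega)
  have h₁ := hγ.le_add_dist hconn hR t n
  have h₂ := hR.le_add_dist hconn hγ n t
  rw [SimpleGraph.dist_comm (u := γ t)] at h₁
  rw [SimpleGraph.dist_comm (u := R 0)] at h₂
  exact ⟨n, hn, by omega, by omega⟩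

lemma setOf_dist_le_two_floor_subset {δ : ℝ} (hδ : 0 ≤ δ) (x : V) :
    {y | Γ.dist x y ≤ 2 * ⌊δ⌋₊} ⊆ {y | (Γ.dist x y : ℝ) ≤ 5 * δ} := by
  intro y (hy : Γ.dist x y ≤ 2 * ⌊δ⌋₊)
  have hy' : (Γ.dist x y : ℝ) ≤ 2 * ⌊δ⌋₊ := by exact_mod_cast hy
  show (Γ.dist x y : ℝ) ≤ 5 * δ
  linarith [Nat.floor_le hδ]

end Hyperbolic

section Lex

variable {α : Type*} [LinearOrder α] {x y : ℕ → α}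

lemma lexLe_antisymm (h₁ : lexLe x y) (h₂ : lexLe y x) : x = y := by
  rcases h₁ with h₁ | ⟨n, hn, hlt⟩
  · exact h₁
  rcases h₂ with h₂ | ⟨n', hn', hlt'⟩
  · exact h₂.symm
  rcases lt_trichotomy n n' with h | rfl | h
  · exact absurd (hn' n h).symm hlt.ne
  · exact absurd hlt hlt'.not_gt
  · exact absurd (hn n' h).symm hlt'.ne

lemma lexLe.le_of_eqOn {k : ℕ} (h : lexLe x y) (hpre : ∀ i < k, x i = y i) : x k ≤ y k := by
  rcases h with rfl | ⟨n, hn, hlt⟩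
  · exact le_rfl
  rcases lt_trichotomy n k with h | rfl | h
  · exact absurd (hpre n h) hlt.ne
  · exact hlt.le
  · exact (hn k h).le

end Lex

section Splice

variable {V : Type*} {Γ : SimpleGraph V}

def splice (x c : ℕ → V) (m l : ℕ) : ℕ → V :=
  fun n => if m ≤ n ∧ n ≤ m + l then c (n - m) else x n

variable {x c : ℕ → V} {m l : ℕ}

lemma splice_add {j : ℕ} (hj : j ≤ l) : splice x c m l (m + j) = c j := by
  simp [splice, hj]

lemma splice_eq_of_le_or_le (hc0 : c 0 = x m) (hcl : c l = x (m + l)) {n : ℕ}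
    (hn : n ≤ m ∨ m + l ≤ n) : splice x c m l n = x n := by
  unfold splice
  split_ifs with h
  · obtain rfl | rfl : n = m ∨ n = m + l := by omega
    · simpa using hc0
    · simpa using hcl
  · rfl

lemma asymp_of_dist_le (hconn : Γ.Connected) {x y : ℕ → V} {K : ℕ}
    (h : ∀ n, Γ.dist (x n) (y n) ≤ K) : Asymp Γ x y := by
  refine ⟨K, fun n => ⟨n, ?_⟩, fun n => ⟨n, ?_⟩⟩ <;>
  · obtain ⟨w, hw⟩ := hconn.exists_walk_length_eq_dist (x n) (y n)
    exact ⟨w, hw ▸ h n⟩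

lemma GeoRay.splice (hconn : Γ.Connected) (hx : GeoRay Γ x) (hc : GeoSeg Γ c l)
    (hc0 : c 0 = x m) (hcl : c l = x (m + l)) : GeoRay Γ (splice x c m l) := by
  refine geoRay_of_adj hconn (fun n => ?_) (fun N => ⟨N + m + l, by omega, ?_⟩)
  · by_cases hn : m ≤ n ∧ n < m + l
    · obtain ⟨j, rfl⟩ : ∃ j, n = m + j := ⟨n - m, by omega⟩
      rw [splice_add (by omega), add_assoc, splice_add (by omega)]
      exact hc.1 j (by omega)
    · rw [splice_eq_of_le_or_le hc0 hcl (by omega), splice_eq_of_le_or_le hc0 hcl (by omega)]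
      exact hx.1 n
  · rw [splice_eq_of_le_or_le hc0 hcl (by omega), splice_eq_of_le_or_le hc0 hcl (by omega),
      hx.dist_zero]

lemma asymp_splice (hconn : Γ.Connected) (hx : GeoRay Γ x) (hc : GeoSeg Γ c l)
    (hc0 : c 0 = x m) (hcl : c l = x (m + l)) : Asymp Γ (splice x c m l) x := by
  refine asymp_of_dist_le hconn (K := 2 * l) fun n => ?_
  by_cases hn : m ≤ n ∧ n ≤ m + l
  · obtain ⟨j, rfl⟩ : ∃ j, n = m + j := ⟨n - m, by omega⟩
    rw [splice_add (by omega)]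
    have h₁ := hc.2 j (by omega) 0 (Nat.zero_le _)
    have h₂ := hconn.dist_triangle (u := c j) (v := c 0) (w := x (m + j))
    rw [hc0, hx.dist_eq_sub (by omega), Nat.dist_zero_right] at *
    omega
  · rw [splice_eq_of_le_or_le hc0 hcl (by omega), SimpleGraph.dist_self]
    exact Nat.zero_le _

end Splice

section LexMinRay

variable {G : Type*} [Group G] [LinearOrder G] {Γ : SimpleGraph G}

/-- In the paper's notation, `σ_ζ = typ R` for the ray `R` with `R 0 = 1` and
`IsLexMinRay Γ ζ R`. -/
def IsLexMinRay (Γ : SimpleGraph G) (E R : ℕ → G) : Prop :=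
  GeoRay Γ R ∧ Asymp Γ R E ∧
    ∀ W, GeoRay Γ W → W 0 = R 0 → Asymp Γ W E → lexLe (typ R) (typ W)

variable {E E' R R' : ℕ → G}

lemma IsLexMinRay.typ_eq (hR : IsLexMinRay Γ E R) (hR' : IsLexMinRay Γ E' R')
    (hE : Asymp Γ E E') (h0 : R 0 = R' 0) : typ R = typ R' :=
  lexLe_antisymm (hR.2.2 R' hR'.1 h0.symm (asymp_trans hR'.2.1 (asymp_symm hE)))
    (hR'.2.2 R hR.1 h0 (asymp_trans hR.2.1 hE))

/-- Splicing the detour into `R` gives a competitor in the minimality of `R`. -/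
lemma IsLexMinRay.typ_le_of_detour (hconn : Γ.Connected) (hR : IsLexMinRay Γ E R)
    {c : ℕ → G} {m l j : ℕ} (hc : GeoSeg Γ c l) (hc0 : c 0 = R m) (hcl : c l = R (m + l))
    (hj : j < l) (hpre : ∀ i ≤ j, c i = R (m + i)) : typ R (m + j) ≤ typ c j := by
  have hWR : ∀ i ≤ m + j, splice R c m l i = R i := by
    intro i hi
    by_cases him : i ≤ m
    · exact splice_eq_of_le_or_le hc0 hcl (Or.inl him)
    · obtain ⟨i, rfl⟩ : ∃ i', i = m + i' := ⟨i - m, by omega⟩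
      rw [splice_add (by omega), hpre i (by omega)]
  have hlex : lexLe (typ R) (typ (splice R c m l)) :=
    hR.2.2 _ (hR.1.splice hconn hc hc0 hcl) (hWR 0 (Nat.zero_le _))
      (asymp_trans (asymp_splice hconn hR.1 hc hc0 hcl) hR.2.1)
  have hW : typ (splice R c m l) (m + j) = typ c j := by
    simp only [typ]
    rw [splice_add hj.le, add_assoc, splice_add hj]
  rw [← hW]
  refine hlex.le_of_eqOn fun i hi => ?_
  simp only [typ, hWR i hi.le, hWR (i + 1) hi]

/-- At the first step where the rays would diverge, each is a detour of the other, so both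
steps have the same type. -/
lemma IsLexMinRay.eq_between_of_meet (hconn : Γ.Connected) (hR : IsLexMinRay Γ E R)
    (hR' : IsLexMinRay Γ E R') {m m' l : ℕ} (h₁ : R m = R' m')
    (h₂ : R (m + l) = R' (m' + l)) : ∀ j ≤ l, R (m + j) = R' (m' + j) := by
  suffices ∀ j ≤ l, ∀ i ≤ j, R (m + i) = R' (m' + i) from fun j hj => this j hj j le_rfl
  intro j
  induction j with
  | zero =>
    intro _ i hi
    obtain rfl : i = 0 := by omega
    exact h₁
  | succ j ih =>
    intro hj i hi
    have hpre := ih (by omega)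
    rcases Nat.lt_or_ge i (j + 1) with hi' | hi'
    · exact hpre i (by omega)
    obtain rfl : i = j + 1 := by omega
    have hle := hR'.typ_le_of_detour hconn (hR.1.geoSeg m l) h₁ h₂ hj hpre
    have hge := hR.typ_le_of_detour hconn (hR'.1.geoSeg m' l) h₁.symm h₂.symm hj
      fun i hi => (hpre i hi).symm
    have heq := le_antisymm hle hge
    simp only [typ, hpre j le_rfl] at heq
    exact (mul_left_cancel heq).symm

lemma IsLexMinRay.eq_add_of_frequently_meet (hconn : Γ.Connected) (hR : IsLexMinRay Γ E R)
    (hR' : IsLexMinRay Γ E R') {p₀ q₀ : ℕ} (h₀ : R p₀ = R' q₀)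
    (hfreq : ∀ B, ∃ p q, B < p ∧ R p = R' q) : ∀ j, R (p₀ + j) = R' (q₀ + j) := by
  intro j
  obtain ⟨p, q, hp, hpq⟩ := hfreq (p₀ + q₀ + j + Γ.dist (R 0) (R' 0))
  have hpq' := hR.1.le_add_dist hconn hR'.1 p q
  have hqp := hR'.1.le_add_dist hconn hR.1 q p
  rw [hpq, SimpleGraph.dist_self] at hpq'
  rw [← hpq, SimpleGraph.dist_self, SimpleGraph.dist_comm] at hqp
  have hgap : p - p₀ = q - q₀ := by
    rw [← hR.1.dist_eq_sub (by omega), ← hR'.1.dist_eq_sub (by omega), h₀, hpq]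
  exact hR.eq_between_of_meet hconn hR' h₀ (l := p - p₀)
    (by rw [show p₀ + (p - p₀) = p by omega, show q₀ + (p - p₀) = q by omega]; exact hpq)
    j (by omega)

/-- Two rays meeting at unboundedly large indices coincide from every common point on; any
other pair only meets below some bound. -/
lemma exists_merge_threshold (hconn : Γ.Connected) {ι : Type*} {W : Set ι} (hW : W.Finite)
    {R : ι → ℕ → G} (hR : ∀ g ∈ W, IsLexMinRay Γ E (R g)) :
    ∃ B, ∀ g ∈ W, ∀ h ∈ W, ∀ p q, B < p → R g p = R h q →
      ∀ p' q', R g p' = R h q' → ∀ j, R g (p' + j) = R h (q' + j) := by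
  have hev : ∀ g ∈ W, ∀ h ∈ W, ∀ᶠ B in atTop, ∀ p q, B < p → R g p = R h q →
      ∀ p' q', R g p' = R h q' → ∀ j, R g (p' + j) = R h (q' + j) := by
    intro g hg h hh
    by_cases hfreq : ∀ B, ∃ p q, B < p ∧ R g p = R h q
    · exact .of_forall fun _ _ _ _ _ _ _ h' =>
        (hR g hg).eq_add_of_frequently_meet hconn (hR h hh) h' hfreq
    · push Not at hfreq
      obtain ⟨B₀, hB₀⟩ := hfreq
      filter_upwards [eventually_ge_atTop B₀] with B hB p q hp hpq
      exact absurd hpq (hB₀ p q (by omega))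
  simp_rw [← hW.eventually_all] at hev
  exact hev.exists

end LexMinRay

section Cayley

variable {G : Type*} [Group G] {S : Set G}

lemma cayley_adj {a b : G} : (cayley S).Adj a b ↔ a ≠ b ∧ (a⁻¹ * b ∈ S ∨ b⁻¹ * a ∈ S) :=
  fromRel_adj _ _ _

lemma cayley_adj_one_of_mem {s : G} (hs : s ∈ S) (hs1 : 1 ≠ s) : (cayley S).Adj 1 s :=
  cayley_adj.mpr ⟨hs1, Or.inl (by simpa using hs)⟩

def cayleyMulLeft (S : Set G) (g : G) : cayley S →g cayley S where
  toFun x := g * x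
  map_rel' := by simp [cayley_adj, mul_assoc]

lemma Asymp.mul_left {x y : ℕ → G} (h : Asymp (cayley S) x y) (g : G) :
    Asymp (cayley S) (fun n => g * x n) (fun n => g * y n) := by
  obtain ⟨K, h₁, h₂⟩ := h
  refine ⟨K, fun n => ?_, fun n => ?_⟩
  · obtain ⟨m, w, hw⟩ := h₁ n
    exact ⟨m, w.map (cayleyMulLeft S g), (Walk.length_map _ _).trans_le hw⟩
  · obtain ⟨m, w, hw⟩ := h₂ n
    exact ⟨m, w.map (cayleyMulLeft S g), (Walk.length_map _ _).trans_le hw⟩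

lemma typ_mul_left (g : G) (x : ℕ → G) : typ (fun n => g * x n) = typ x := by
  funext n
  simp [typ, mul_assoc]

lemma cayley_connected (hgen : Subgroup.closure S = ⊤) : (cayley S).Connected := by
  have hreach : ∀ g a b, (cayley S).Reachable a b → (cayley S).Reachable (g * a) (g * b) :=
    fun g _ _ h => h.map (cayleyMulLeft S g)
  have h1 : ∀ g, (cayley S).Reachable 1 g := fun g => by
    refine Subgroup.closure_induction (p := fun g _ => (cayley S).Reachable 1 g) (fun s hs => ?_)
      (Reachable.refl 1) (fun a b _ _ ha hb => ha.trans (by simpa using hreach a 1 b hb))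
      (fun a _ ha => by simpa using (hreach a⁻¹ 1 a ha).symm) (hgen ▸ Subgroup.mem_top g)
    by_cases hs1 : (1 : G) = s
    · exact hs1 ▸ Reachable.refl 1
    · exact (cayley_adj_one_of_mem hs hs1).reachable
  exact (connected_iff _).mpr ⟨fun a b => by simpa using hreach a 1 (a⁻¹ * b) (h1 _), ⟨1⟩⟩

lemma cayley_dist_mul_left (hconn : (cayley S).Connected) (g a b : G) :
    (cayley S).dist (g * a) (g * b) = (cayley S).dist a b := by
  have key : ∀ g a b : G, (cayley S).dist (g * a) (g * b) ≤ (cayley S).dist a b := by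
    intro g a b
    obtain ⟨w, hw⟩ := hconn.exists_walk_length_eq_dist a b
    exact (dist_le (w.map (cayleyMulLeft S g))).trans (by rw [Walk.length_map, hw])
  refine le_antisymm (key g a b) ?_
  simpa using key g⁻¹ (g * a) (g * b)

lemma GeoRay.mul_left (hconn : (cayley S).Connected) {x : ℕ → G} (hx : GeoRay (cayley S) x)
    (g : G) : GeoRay (cayley S) (fun n => g * x n) :=
  ⟨fun n => (cayleyMulLeft S g).map_adj (hx.1 n), fun m n => by
    rw [cayley_dist_mul_left hconn, hx.2]⟩

lemma IsLexMinRay.mul_left [LinearOrder G] (hconn : (cayley S).Connected) {E R : ℕ → G}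
    (hR : IsLexMinRay (cayley S) E R) (g : G) :
    IsLexMinRay (cayley S) (fun n => g * E n) (fun n => g * R n) := by
  refine ⟨hR.1.mul_left hconn g, hR.2.1.mul_left g, fun W hW hW0 hWE => ?_⟩
  rw [typ_mul_left]
  simpa only [typ_mul_left] using
    hR.2.2 _ (hW.mul_left hconn g⁻¹) (by simp [hW0]) (by simpa using hWE.mul_left g⁻¹)

/-- The ray from `g` is the translate by `g` of the ray from `1` labelling `g⁻¹ E`. -/
lemma exists_isLexMinRay_translates [LinearOrder G] (hconn : (cayley S).Connected)
    {E : ℕ → G} (hE : GeoRay (cayley S) E) {σ : (ℕ → G) → ℕ → G}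
    (hσ : ∀ Z, GeoRay (cayley S) Z → ∃ Δ, Δ 0 = 1 ∧ IsLexMinRay (cayley S) Z Δ ∧ typ Δ = σ Z) :
    ∃ R : G → ℕ → G, (∀ g, R g 0 = g) ∧ (∀ g, IsLexMinRay (cayley S) E (R g)) ∧
      ∀ g Z, GeoRay (cayley S) Z → Asymp (cayley S) (fun n => g * Z n) E → σ Z = typ (R g) := by
  choose Δ hΔ0 hΔ hΔσ using fun g : G => hσ _ (hE.mul_left hconn g⁻¹)
  refine ⟨fun g n => g * Δ g n, fun g => by simp [hΔ0],
    fun g => by simpa using (hΔ g).mul_left hconn g, fun g Z hZ hgZ => ?_⟩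
  obtain ⟨ΔZ, hΔZ0, hΔZ, hΔZσ⟩ := hσ Z hZ
  rw [← hΔZσ, typ_mul_left]
  exact hΔZ.typ_eq (hΔ g) (by simpa using hgZ.mul_left g⁻¹) (hΔZ0.trans (hΔ0 g).symm)

lemma cayley_dist_one_prod_le (hconn : (cayley S).Connected) {l : List G}
    (hl : ∀ s ∈ l, s ∈ S) :
    (cayley S).dist 1 l.prod ≤ l.length := by
  induction l with
  | nil => simp
  | cons s l ih =>
    have hs : (cayley S).dist 1 s ≤ 1 := by
      by_cases hs1 : (1 : G) = s
      · simp [← hs1]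
      · exact (dist_eq_one_iff_adj.mpr (cayley_adj_one_of_mem (hl s (by simp)) hs1)).le
    have := hconn.dist_triangle (u := 1) (v := s) (w := s * l.prod)
    have hshift := cayley_dist_mul_left hconn s 1 l.prod
    rw [mul_one] at hshift
    have := ih fun t ht => hl t (by simp [ht])
    simp only [List.prod_cons, List.length_cons]
    omega

end Cayley

lemma finite_setOf_wordLenLe {G : Type*} [Group G] (S : Finset G) (r : ℝ) :
    {g | wordLenLe (S : Set G) g r}.Finite := by
  refine ((List.finite_length_le S ⌊r⌋₊).image fun l => (l.map (↑)).prod).subset ?_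
  rintro g ⟨l, hl, rfl, hlen⟩
  lift l to List S using hl
  exact ⟨l, by simpa using Nat.le_floor hlen, rfl⟩

section Shift

variable {α : Type*} {x y z : ℕ → α}

lemma shiftDistLe.mono {c c' : ℝ} (h : shiftDistLe x y c) (hc : c ≤ c') : shiftDistLe x y c' :=
  let ⟨w, hw⟩ := h
  ⟨w, hw.trans hc⟩

lemma exists_shiftGraph_walk (x : ℕ → α) (a : ℕ) :
    ∃ w : (shiftGraph α).Walk x (fun n => x (a + n)), w.length ≤ a := by
  induction a with
  | zero => exact ⟨Walk.nil.copy rfl (by simp), by simp⟩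
  | succ a ih =>
    obtain ⟨w, hw⟩ := ih
    have hshift : shift (fun n => x (a + n)) = fun n => x (a + 1 + n) := by
      funext n
      simp only [shift, add_assoc, add_comm n 1]
    by_cases heq : (fun n => x (a + n)) = fun n => x (a + 1 + n)
    · exact ⟨w.copy rfl heq, by rw [Walk.length_copy]; omega⟩
    · have hadj : (shiftGraph α).Adj (fun n => x (a + n)) (fun n => x (a + 1 + n)) :=
        (fromRel_adj _ _ _).mpr ⟨heq, Or.inl hshift⟩
      exact ⟨w.concat hadj, by rw [Walk.length_concat]; omega⟩

lemma shiftDistLe_of_eq_add {a b : ℕ} (h : ∀ n, x (a + n) = y (b + n)) :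
    shiftDistLe x y (a + b) := by
  obtain ⟨w₁, hw₁⟩ := exists_shiftGraph_walk x a
  obtain ⟨w₂, hw₂⟩ := exists_shiftGraph_walk y b
  refine ⟨(w₁.copy rfl (funext h)).append w₂.reverse, ?_⟩
  rw [Walk.length_append, Walk.length_copy, Walk.length_reverse]
  exact_mod_cast Nat.add_le_add hw₁ hw₂

lemma tailEquiv_trans (h₁ : tailEquiv x y) (h₂ : tailEquiv y z) : tailEquiv x z := by
  obtain ⟨a, b, h₁⟩ := h₁
  obtain ⟨b', c, h₂⟩ := h₂
  refine ⟨a + b', c + b, fun n => ?_⟩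
  rw [add_assoc, h₁, add_left_comm, h₂, add_assoc]

lemma tailEquiv_of_adj (h : (shiftGraph α).Adj x y) : tailEquiv x y := by
  rcases ((fromRel_adj _ _ _).mp h).2 with rfl | rfl
  · exact ⟨1, 0, fun n => by simp [shift, add_comm]⟩
  · exact ⟨0, 1, fun n => by simp [shift, add_comm]⟩

lemma tailEquiv_of_walk {x y : ℕ → α} : (shiftGraph α).Walk x y → tailEquiv x y
  | .nil => ⟨0, 0, fun _ => rfl⟩
  | .cons h w => tailEquiv_trans (tailEquiv_of_adj h) (tailEquiv_of_walk w)

lemma exists_tailEquiv_reps [Nonempty α] {ι : Type*} {P : ι → Set (ℕ → α)} {c : ℝ}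
    (hP : ∀ i, ∀ u ∈ P i, ∀ v ∈ P i, shiftDistLe u v c) :
    ∃ reps : ι → ℕ → α, ∀ i, ∀ u ∈ P i, tailEquiv u (reps i) := by
  classical
  refine ⟨fun i => if h : (P i).Nonempty then h.some else Classical.arbitrary _,
    fun i u hu => ?_⟩
  have hne : (P i).Nonempty := ⟨u, hu⟩
  obtain ⟨w, -⟩ := hP i u hu _ hne.some_mem
  simpa [hne] using tailEquiv_of_walk w

end Shift

lemma exists_injOn_fin {β : Type*} {s : Set β} {n : ℕ} [NeZero n] (hs : s.encard ≤ n) :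
    ∃ f : β → Fin n, Set.InjOn f s := by
  obtain ⟨f, -, hf⟩ := (Set.finite_of_encard_le_coe hs).exists_injOn_of_encard_le
    (t := (Set.univ : Set (Fin n))) (by simpa using hs)
  exact ⟨f, hf⟩

lemma exists_fin_cover_fibres {ι β γ : Type*} {W : Set ι} {I : Set β} {n : ℕ} [NeZero n]
    (hI : I.encard ≤ n) {κ : ι → β} (hκ : ∀ g ∈ W, κ g ∈ I) (u : ι → γ) :
    ∃ P : Fin n → Set γ, (∀ g ∈ W, ∃ i, u g ∈ P i) ∧
      ∀ i, ∀ a ∈ P i, ∀ b ∈ P i, ∃ g ∈ W, ∃ h ∈ W, κ g = κ h ∧ a = u g ∧ b = u h := by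
  obtain ⟨f, hf⟩ := exists_injOn_fin hI
  refine ⟨fun i => u '' {g | g ∈ W ∧ f (κ g) = i}, fun g hg => ⟨_, g, ⟨hg, rfl⟩, rfl⟩, ?_⟩
  rintro i _ ⟨g, ⟨hg, rfl⟩, rfl⟩ _ ⟨h, ⟨hh, hhi⟩, rfl⟩
  exact ⟨g, hg, h, hh, hf (hκ g hg) (hκ h hh) hhi.symm, rfl, rfl⟩

section Cover

variable {G : Type*} [Group G] [LinearOrder G] {Γ : SimpleGraph G} {E γ : ℕ → G}
  {ι : Type*} {W : Set ι} {R : ι → ℕ → G} {k ρ : ℕ}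

/-- Label each ray by its points near `γ t₁` and near `γ t₀`. Beyond the merge threshold, a
common point near `γ t₁` forces two rays to coincide from any common point on, in
particular from their common point near `γ t₀`. -/
lemma exists_fingerprint (hconn : Γ.Connected) (hthin : DeltaThin Γ k) (hγ : GeoRay Γ γ)
    (hW : W.Finite) (hR : ∀ g ∈ W, IsLexMinRay Γ E (R g)) (hRγ : ∀ g ∈ W, Asymp Γ (R g) γ)
    (hρ : ∀ g ∈ W, Γ.dist (γ 0) (R g 0) ≤ ρ) :
    ∃ (x₁ x₀ : G) (m : ι → ℕ), (∀ g ∈ W, m g ≤ 2 * ρ + 3 * k + 1) ∧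
      ∃ κ : ι → G × G,
        (∀ g ∈ W, κ g ∈ {y | Γ.dist x₁ y ≤ 2 * k} ×ˢ {y | Γ.dist x₀ y ≤ 2 * k}) ∧
        ∀ g ∈ W, ∀ h ∈ W, κ g = κ h → ∀ j, R g (m g + j) = R h (m h + j) := by
  obtain ⟨B, hB⟩ := exists_merge_threshold hconn hW hR
  have hnear : ∀ t, ρ + k < t → ∃ n : ι → ℕ, ∀ g ∈ W,
      Γ.dist (R g (n g)) (γ t) ≤ 2 * k ∧ t ≤ n g + 2 * k + ρ ∧ n g ≤ t + 2 * k + ρ := by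
    intro t ht
    have : ∀ g, ∃ n, g ∈ W →
        Γ.dist (R g n) (γ t) ≤ 2 * k ∧ t ≤ n + 2 * k + ρ ∧ n ≤ t + 2 * k + ρ := fun g => by
      by_cases hg : g ∈ W
      · obtain ⟨n, hn⟩ :=
          hthin.exists_near_of_asymp hconn hγ (hR g hg).1 (hRγ g hg) (hρ g hg) ht
        exact ⟨n, fun _ => hn⟩
      · exact ⟨0, fun h => (hg h).elim⟩
    choose n hn using this
    exact ⟨n, hn⟩
  obtain ⟨n, hn⟩ := hnear (B + 2 * k + ρ + 1) (by omega)
  obtain ⟨m, hm⟩ := hnear (ρ + k + 1) (by omega)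
  refine ⟨γ (B + 2 * k + ρ + 1), γ (ρ + k + 1), m, fun g hg => by have := hm g hg; omega,
    fun g => (R g (n g), R g (m g)), fun g hg => ?_, fun g hg h hh hgh => ?_⟩
  · exact ⟨dist_comm.trans_le (hn g hg).1, dist_comm.trans_le (hm g hg).1⟩
  · obtain ⟨hgh₁, hgh₀⟩ := Prod.ext_iff.mp hgh
    exact hB g hg h hh (n g) (n h) (by have := hn g hg; omega) hgh₁ (m g) (m h) hgh₀

theorem exists_cover_of_isLexMinRay (hconn : Γ.Connected) (hthin : DeltaThin Γ k)
    {M : ℕ} (hM : ∀ x, {y | Γ.dist x y ≤ 2 * k}.encard ≤ M) (hγ : GeoRay Γ γ)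
    (hW : W.Finite) (hR : ∀ g ∈ W, IsLexMinRay Γ E (R g)) (hRγ : ∀ g ∈ W, Asymp Γ (R g) γ)
    (hρ : ∀ g ∈ W, Γ.dist (γ 0) (R g 0) ≤ ρ) :
    ∃ P : Fin (M ^ 2) → Set (ℕ → G), (∀ g ∈ W, ∃ i, typ (R g) ∈ P i) ∧
      ∀ i, ∀ u ∈ P i, ∀ v ∈ P i, shiftDistLe u v (4 * ρ + 6 * k + 2) := by
  obtain ⟨x₁, x₀, m, hm, κ, hκ, hmerge⟩ := exists_fingerprint hconn hthin hγ hW hR hRγ hρ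
  have : NeZero M := by
    have h := (Set.one_le_encard_iff_nonempty.mpr ⟨x₀, by simp⟩).trans (hM x₀)
    exact ⟨Nat.one_le_iff_ne_zero.mp (Nat.one_le_cast.mp h)⟩
  have hI : ({y | Γ.dist x₁ y ≤ 2 * k} ×ˢ {y | Γ.dist x₀ y ≤ 2 * k}).encard ≤ (M ^ 2 : ℕ) := by
    rw [Set.encard_prod, Nat.cast_pow, sq]
    exact mul_le_mul' (hM x₁) (hM x₀)
  obtain ⟨P, hcover, hfibre⟩ := exists_fin_cover_fibres hI hκ fun g => typ (R g)
  refine ⟨P, hcover, fun i u hu v hv => ?_⟩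
  obtain ⟨g, hg, h, hh, hgh, rfl, rfl⟩ := hfibre i u hu v hv
  have htyp : ∀ j, typ (R g) (m g + j) = typ (R h) (m h + j) := fun j => by
    simp only [typ, add_assoc, hmerge g hg h hh hgh]
  refine (shiftDistLe_of_eq_add htyp).mono ?_
  have := hm g hg
  have := hm h hh
  exact_mod_cast (by omega : m g + m h ≤ 4 * ρ + 6 * k + 2)

end Cover

end BA

open BA in
theorem stmt10_general {G : Type*} [Group G] [LinearOrder G] (S : Finset G)
    (hgen : Subgroup.closure (S : Set G) = ⊤)
    (δ : ℝ) (hδ : 0 < δ) (hhyp : DeltaThin (cayley (S : Set G)) δ)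
    (M : ℕ)
    (hM : ∀ g : G, {h : G | ((cayley (S : Set G)).dist g h : ℝ) ≤ 5 * δ}.encard ≤ (M : ℕ∞))
    (r : ℝ) (hr : 0 < r)
    (Γη : ℕ → G) (hΓη : GeoRay (cayley (S : Set G)) Γη)
    (σ : (ℕ → G) → (ℕ → G))
    (hσ : ∀ Z : ℕ → G, GeoRay (cayley (S : Set G)) Z →
      ∃ Δ : ℕ → G, GeoRay (cayley (S : Set G)) Δ ∧ Δ 0 = 1 ∧
        Asymp (cayley (S : Set G)) Δ Z ∧ typ Δ = σ Z ∧
        ∀ Δ' : ℕ → G, GeoRay (cayley (S : Set G)) Δ' → Δ' 0 = 1 →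
          Asymp (cayley (S : Set G)) Δ' Z → lexLe (σ Z) (typ Δ')) :
    ∃ P : Fin (M ^ 2) → Set (ℕ → G),
      (∀ Z : ℕ → G, GeoRay (cayley (S : Set G)) Z →
        (∃ g : G, wordLenLe (S : Set G) g r ∧
          Asymp (cayley (S : Set G)) (fun n => g * Z n) Γη) →
        ∃ i, σ Z ∈ P i) ∧
      (∀ i, ∀ u ∈ P i, ∀ v ∈ P i, shiftDistLe u v (8 * (r + 3 * δ + 2))) ∧
      (∃ reps : Fin (M ^ 2) → (ℕ → G),
        ∀ Z : ℕ → G, GeoRay (cayley (S : Set G)) Z →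
          (∃ g : G, wordLenLe (S : Set G) g r ∧
            Asymp (cayley (S : Set G)) (fun n => g * Z n) Γη) →
          ∃ i, tailEquiv (σ Z) (reps i)) := by
  have hconn : (cayley (S : Set G)).Connected := cayley_connected hgen
  obtain ⟨R, hR0, hR, hσR⟩ := exists_isLexMinRay_translates hconn hΓη fun Z hZ => by
    obtain ⟨Δ, hΔ, hΔ0, hΔZ, hΔσ, hmin⟩ := hσ Z hZ
    exact ⟨Δ, hΔ0, ⟨hΔ, hΔZ, fun W hW hW0 hWZ => hΔσ ▸ hmin W hW (hW0.trans hΔ0) hWZ⟩, hΔσ⟩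
  obtain ⟨P, hcover, hdiam⟩ := exists_cover_of_isLexMinRay hconn hhyp.floor
    (fun x => (Set.encard_le_encard (setOf_dist_le_two_floor_subset hδ.le x)).trans (hM x)) (hR 1).1
    (finite_setOf_wordLenLe S r) (fun g _ => hR g)
    (fun g _ => asymp_trans (hR g).2.1 (asymp_symm (hR 1).2.1)) (ρ := ⌊r⌋₊) fun g hg => by
      obtain ⟨l, hl, rfl, hlen⟩ := hg
      simpa [hR0] using (cayley_dist_one_prod_le hconn hl).trans (Nat.le_floor hlen)
  have hP : ∀ Z, GeoRay (cayley (S : Set G)) Z → (∃ g, wordLenLe (S : Set G) g r ∧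
      Asymp (cayley (S : Set G)) (fun n => g * Z n) Γη) → ∃ i, σ Z ∈ P i := by
    rintro Z hZ ⟨g, hg, hgZ⟩
    exact hσR g Z hZ hgZ ▸ hcover g hg
  have hdiam' : ∀ i, ∀ u ∈ P i, ∀ v ∈ P i, shiftDistLe u v (8 * (r + 3 * δ + 2)) :=
    fun i u hu v hv => (hdiam i u hu v hv).mono <| by
      linarith [Nat.floor_le hr.le, Nat.floor_le hδ.le]
  obtain ⟨reps, hreps⟩ := exists_tailEquiv_reps hdiam'
  exact ⟨P, hP, hdiam', reps, fun Z hZ hZW => (hP Z hZ hZW).imp fun i hi => hreps i _ hi⟩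

open BA in
/-- Key lemma. Fix a boundary point `η` (a ray `Γη`), `r > 0`,
and the assignment `ζ ↦ σ_ζ` of lexicographically minimal types. The types of
the boundary points in the Schreier-metric ball `B_ρ(η, r)` (i.e. points `ζ`
with `g ζ = η` for some `g` of word length `≤ r`) can be partitioned into at
most `M²` sets, each of `ρ_s`-diameter at most `8(r + 3δ + 2)`; in particular
they meet at most `M²` tail equivalence classes, where `M` bounds the size of
`5δ`-balls in the Cayley graph. -/
theorem stmt10 {G : Type*} [Group G] [LinearOrder G] (S : Finset G)
    (hsym : ∀ s ∈ S, s⁻¹ ∈ S) (hgen : Subgroup.closure (S : Set G) = ⊤)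
    (δ : ℝ) (hδ : 0 < δ) (hhyp : DeltaThin (cayley (S : Set G)) δ)
    (M : ℕ)
    (hM : ∀ g : G, {h : G | ((cayley (S : Set G)).dist g h : ℝ) ≤ 5 * δ}.encard ≤ (M : ℕ∞))
    (r : ℝ) (hr : 0 < r)
    (Γη : ℕ → G) (hΓη : GeoRay (cayley (S : Set G)) Γη)
    (σ : (ℕ → G) → (ℕ → G))
    (hσ : ∀ Z : ℕ → G, GeoRay (cayley (S : Set G)) Z →
      ∃ Δ : ℕ → G, GeoRay (cayley (S : Set G)) Δ ∧ Δ 0 = 1 ∧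
        Asymp (cayley (S : Set G)) Δ Z ∧ typ Δ = σ Z ∧
        ∀ Δ' : ℕ → G, GeoRay (cayley (S : Set G)) Δ' → Δ' 0 = 1 →
          Asymp (cayley (S : Set G)) Δ' Z → lexLe (σ Z) (typ Δ')) :
    ∃ P : Fin (M ^ 2) → Set (ℕ → G),
      (∀ Z : ℕ → G, GeoRay (cayley (S : Set G)) Z →
        (∃ g : G, wordLenLe (S : Set G) g r ∧
          Asymp (cayley (S : Set G)) (fun n => g * Z n) Γη) →
        ∃ i, σ Z ∈ P i) ∧
      (∀ i, ∀ u ∈ P i, ∀ v ∈ P i, shiftDistLe u v (8 * (r + 3 * δ + 2))) ∧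
      (∃ reps : Fin (M ^ 2) → (ℕ → G),
        ∀ Z : ℕ → G, GeoRay (cayley (S : Set G)) Z →
          (∃ g : G, wordLenLe (S : Set G) g r ∧
            Asymp (cayley (S : Set G)) (fun n => g * Z n) Γη) →
          ∃ i, tailEquiv (σ Z) (reps i)) :=
  stmt10_general S hgen δ hδ hhyp M hM r hr Γη hΓη σ hσ
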